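/- arXiv:math/0112287 — 2 statements merged into one kernel-verified Lean document; each statement's English description precedes it below -/
import Mathlib

section
/- Suppose c = (i, η*, R) satisfies all clauses of the definition of a simple i-creature except possibly clause (d) (so: the kind/base conditions hold, R is a nonempty subset of {η ∈ spec_{n_{3,i}} : η* ⊆ η and |dom(η)| < n_{2,i}} with |R| < n_{1,i}), and suppose norm⁰(c) > 0, where norm⁰ is computed from R by the same formula as for simple creatures. Then c satisfies clause (d): for every η₁ ∈ R and every x ∈ dom(η₁) ∖ dom(η*) there is η₂ ∈ R such that if x ∈ dom(η₂) then η₁(x) ≠ η₂(x). Hence c is a simple i-creature. -/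
open Classical Set

noncomputable section

/-- Finite partial functions from ordinals to `ℕ`, encoded as `Option`-valued functions. -/
abbrev PF := Ordinal → Option ℕ

/-- The domain of a partial function. -/
def pdom (η : PF) : Set Ordinal := {x | η x ≠ none}

/-- `η` is a subfunction of `ν`. -/
def pfsub (η ν : PF) : Prop := ∀ x v, η x = some v → ν x = some v

/-- `η` and `ν` are compatible partial functions. -/
def pfcompat (η ν : PF) : Prop := ∀ x a b, η x = some a → ν x = some b → a = b

/-- The union of two partial functions (left side has priority). -/
def punion (η ν : PF) : PF := fun x => match η x with | some v => some v | none => ν x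

/-- The empty partial function. -/
def emptyPF : PF := fun _ => none

/-- The first uncountable ordinal. -/
def omega1 : Ordinal := (Cardinal.aleph 1).ord

/-- An Aronszajn tree: a tree of height `ω₁`, with countable levels, no uncountable
branch, whose underlying set consists of countable ordinals and whose `α`-th level is
contained in `[ω·α, ω·α + ω)`; thus the level of a node `x` is `x / ω`. -/
structure ATree where
  mem : Set Ordinal
  lt : Ordinal → Ordinal → Prop
  mem_lt_omega1 : ∀ x ∈ mem, x < omega1
  lt_mem : ∀ {x y}, lt x y → x ∈ mem ∧ y ∈ mem
  lt_trans : ∀ {x y z}, lt x y → lt y z → lt x z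
  lt_level : ∀ {x y}, lt x y → x / Ordinal.omega0 < y / Ordinal.omega0
  preds_linear : ∀ z ∈ mem, ∀ {x y}, lt x z → lt y z → (lt x y ∨ x = y ∨ lt y x)
  preds_full : ∀ z ∈ mem, ∀ β < z / Ordinal.omega0, ∃ x, lt x z ∧ x / Ordinal.omega0 = β
  height : ∀ α < omega1, ∃ x ∈ mem, x / Ordinal.omega0 = α
  aronszajn : ∀ C : Set Ordinal, C ⊆ mem → IsChain lt C → C.Countable

/-- `(T_A)_{<α}`: the union of the levels below `α`. -/
def below (T : ATree) (α : Ordinal) : Set Ordinal := {x | x ∈ T.mem ∧ x / Ordinal.omega0 < α}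

/-- A branch of `T_A`: a maximal chain. -/
def Branch (T : ATree) (B : Set Ordinal) : Prop :=
  B ⊆ T.mem ∧ IsChain T.lt B ∧ ∀ C, B ⊆ C → C ⊆ T.mem → IsChain T.lt C → B = C

/-- `x` and `y` are `<_{T_A}`-incomparable. -/
def Incomp (T : ATree) (x y : Ordinal) : Prop := ¬ T.lt x y ∧ ¬ T.lt y x

/-- `spec_n`: finite partial specialization functions with values `< n`. -/
def specn (T : ATree) (n : ℕ) (η : PF) : Prop :=
  pdom η ⊆ T.mem ∧ (pdom η).Finite ∧ (∀ x v, η x = some v → v < n) ∧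
  ∀ x y v, η x = some v → η y = some v → x ≠ y → Incomp T x y

/-- `spec`: finite partial specialization functions. -/
def spec (T : ATree) (η : PF) : Prop := ∃ n, specn T n η

/-- The growth conditions on the three fixed sequences of natural numbers. -/
def SeqOK (n1 n2 n3 : ℕ → ℕ) : Prop :=
  ∀ i, i * n1 i < n3 i ∧ n2 i < n1 (i + 1) ∧ n1 i * n1 i ≤ n1 (i + 1) ∧ n1 i ≤ n2 i

/-- The conditions on the kind `i` and the base of a simple creature. -/
def BaseOK (T : ATree) (n2 n3 : ℕ → ℕ) (i : ℕ) (base : PF) : Prop :=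
  spec T base ∧
  ((base = emptyPF ∧ i = 0) ∨
    ((pdom base).ncard ≤ n2 (i - 1) ∧ (∀ j, j < i → ¬ (pdom base).ncard ≤ n2 (j - 1)) ∧
      specn T (n3 (i - 1)) base))

/-- The conditions on `rge(val(c))` of a simple `i`-creature with base `base`. -/
def ValOK (T : ATree) (n1 n2 n3 : ℕ → ℕ) (i : ℕ) (base : PF) (R : Set PF) : Prop :=
  R.Nonempty ∧ R.Finite ∧
  (∀ η ∈ R, specn T (n3 i) η ∧ pfsub base η ∧ (pdom η).ncard < n2 i) ∧
  R.ncard < n1 i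

/-- Clause (d) of the definition of a simple creature. -/
def ClauseD (base : PF) (R : Set PF) : Prop :=
  ∀ η₁ ∈ R, ∀ x, x ∈ pdom η₁ → x ∉ pdom base →
    ∃ η₂ ∈ R, ∀ v₁ v₂, η₁ x = some v₁ → η₂ x = some v₂ → v₁ ≠ v₂

/-- A simple `i`-creature with base `base` and `rge(val) = R`. -/
def SCr (T : ATree) (n1 n2 n3 : ℕ → ℕ) (i : ℕ) (base : PF) (R : Set PF) : Prop :=
  BaseOK T n2 n3 i base ∧ ValOK T n1 n2 n3 i base R ∧ ClauseD base R

/-- The property of `k` whose maximum is `norm⁰`. -/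
def Norm0P (T : ATree) (n2 n3 : ℕ → ℕ) (i : ℕ) (base : PF) (R : Set PF) (k : ℕ) : Prop :=
  ∀ a : Finset ℕ, (∀ v ∈ a, v < n3 i) → a.card ≤ k →
    ∀ B : Fin k → Set Ordinal, (∀ l, Branch T (B l)) →
      ∃ η ∈ R,
        (∀ x, (∃ l, x ∈ B l) → x ∈ pdom η → x ∉ pdom base →
          ∀ v, η x = some v → v ∉ a) ∧
        (pdom η).ncard * 2 ^ k ≤ n2 i

/-- `norm⁰`: the maximal `k` satisfying `Norm0P`. -/
def norm0 (T : ATree) (n2 n3 : ℕ → ℕ) (i : ℕ) (base : PF) (R : Set PF) : ℕ :=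
  sSup {k | Norm0P T n2 n3 i base R k}

/-- Ceiling of the base-2 logarithm (with `log₂ x = 0` for `x ≤ 1`, in particular `log₂ 0 = 0`). -/
def log2c (x : ℝ) : ℕ := ⌈Real.logb 2 x⌉₊

/-- `norm*(c) = log₂(n_{1,i}/|rge(val(c))|)`. -/
def normStar (n1 : ℕ → ℕ) (i : ℕ) (R : Set PF) : ℕ :=
  log2c ((n1 i : ℝ) / (R.ncard : ℝ))

/-- `norm^{1/2}(c) = min(norm⁰(c), norm*(c))`. -/
def normHalf (T : ATree) (n1 n2 n3 : ℕ → ℕ) (i : ℕ) (base : PF) (R : Set PF) : ℕ :=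
  min (norm0 T n2 n3 i base R) (normStar n1 i R)

/-- `norm¹(c) = log₂(norm⁰(c))`. -/
def norm1 (T : ATree) (n2 n3 : ℕ → ℕ) (i : ℕ) (base : PF) (R : Set PF) : ℕ :=
  log2c ((norm0 T n2 n3 i base R : ℝ))

/-- `norm²(c) = log₂(norm^{1/2}(c))`. -/
def norm2 (T : ATree) (n1 n2 n3 : ℕ → ℕ) (i : ℕ) (base : PF) (R : Set PF) : ℕ :=
  log2c ((normHalf T n1 n2 n3 i base R : ℝ))

/-- The properties required of the two-place function `f` used to define norms of creatures. -/
def FOK (f : ℕ → ℕ → ℝ) : Prop :=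
  (∀ n k, 0 ≤ f n k) ∧
  (∀ n₁ n₂ k₁ k₂, n₂ ≤ n₁ → k₂ ≤ n₂ → k₁ ≤ k₂ → f n₂ k₂ ≤ f n₁ k₁) ∧
  (∀ n k, f n k - 1 ≤ f (n / 2) k) ∧
  (∀ n k, n ≤ k → f n k = 0) ∧
  (∀ n k, 1 ≤ f n k → ∃ k', k < k' ∧ k' < n ∧ ∀ n', k' < n' → n' < n →
    f n' k = f n' k' + f k' k ∧ f n k - 1 ≤ f n' k)

/-- A candidate forcing condition: a set of partial specialization functions
together with a tree order and the `k`-components of the creatures. -/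
structure QCond where
  dom : Set PF
  tlt : PF → PF → Prop
  bval : PF → ℕ

/-- The level of a node: the number of its `◁`-predecessors. -/
def plev (p : QCond) (η : PF) : ℕ := ({ν | p.tlt ν η}).ncard

/-- `p^[ℓ]`: the `ℓ`-th level of `p`. -/
def plevel (p : QCond) (ℓ : ℕ) : Set PF := {η | η ∈ p.dom ∧ plev p η = ℓ}

/-- `suc_p(η)`: the successors of `η` in `p`. -/
def sucSet (p : QCond) (η : PF) : Set PF :=
  {ν | ν ∈ plevel p (plev p η + 1) ∧ pfsub η ν}

/-- `i(p)`: the minimal `i` such that `|dom(rt(p))| ≤ n_{2,i-1}`. -/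
def idx (n2 : ℕ → ℕ) (p : QCond) : ℕ :=
  sInf {i | ∀ r ∈ plevel p 0, (pdom r).ncard ≤ n2 (i - 1)}

/-- An `ω`-branch of `p^[]`. -/
def OBranch (p : QCond) (b : ℕ → PF) : Prop :=
  ∀ ℓ, b ℓ ∈ plevel p ℓ ∧ p.tlt (b ℓ) (b (ℓ + 1))

/-- `norm(c⁺_{p,η}) = f(norm^{1/2}(c_{p,η}), p(η))`. -/
def pnorm (T : ATree) (n1 n2 n3 : ℕ → ℕ) (f : ℕ → ℕ → ℝ) (p : QCond) (η : PF) : ℝ :=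
  f (normHalf T n1 n2 n3 (idx n2 p + plev p η) η (sucSet p η)) (p.bval η)

/-- Membership in the forcing notion `Q = Q_{T_A}`. -/
def InQ (T : ATree) (n1 n2 n3 : ℕ → ℕ) (f : ℕ → ℕ → ℝ) (p : QCond) : Prop :=
  (∀ η ∈ p.dom, spec T η) ∧
  (∀ {x y}, p.tlt x y → x ∈ p.dom ∧ y ∈ p.dom) ∧
  (∀ {x y z}, p.tlt x y → p.tlt y z → p.tlt x z) ∧
  (∀ {x y}, p.tlt x y → pfsub x y ∧ x ≠ y) ∧
  (∀ y ∈ p.dom, ({x | p.tlt x y}).Finite) ∧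
  (∀ y ∈ p.dom, ∀ {x₁ x₂}, p.tlt x₁ y → p.tlt x₂ y →
    (p.tlt x₁ x₂ ∨ x₁ = x₂ ∨ p.tlt x₂ x₁)) ∧
  (∃ r ∈ p.dom, ∀ η ∈ p.dom, η = r ∨ p.tlt r η) ∧
  (∀ ℓ, ∀ η ∈ plevel p ℓ,
    SCr T n1 n2 n3 (idx n2 p + ℓ) η (sucSet p η) ∧
    p.bval η ≤ normHalf T n1 n2 n3 (idx n2 p + ℓ) η (sucSet p η)) ∧
  (∀ η ∈ p.dom, ∀ ν ∈ p.dom, pfcompat η ν → spec T (punion η ν) → punion η ν ∈ p.dom) ∧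
  (∃ k, ∀ η ∈ plevel p k, ∃ α, α < omega1 ∧ ∃ u : Set Ordinal, u.Finite ∧
    u ⊆ T.mem \ below T α ∧
    ∀ b : ℕ → PF, OBranch p b → b k = η → (⋃ ℓ, pdom (b ℓ)) \ u = below T α) ∧
  (∀ b : ℕ → PF, OBranch p b →
    Filter.Tendsto (fun ℓ => pnorm T n1 n2 n3 f p (b ℓ)) Filter.atTop Filter.atTop)

/-- Clauses (a)-(f): `pr` is a projection witnessing `p ≤_Q q`. -/
def Proj (n2 : ℕ → ℕ) (p q : QCond) (pr : PF → PF) : Prop :=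
  (∀ η ∈ q.dom, pr η ∈ p.dom) ∧
  (∀ ℓ, ∀ η ∈ plevel q ℓ, pr η ∈ plevel p (ℓ + idx n2 q - idx n2 p)) ∧
  (∀ η₁ ∈ q.dom, ∀ η₂ ∈ q.dom, (q.tlt η₁ η₂ ∨ η₁ = η₂) →
    (p.tlt (pr η₁) (pr η₂) ∨ pr η₁ = pr η₂)) ∧
  (∀ η ∈ q.dom, p.bval (pr η) ≤ q.bval η) ∧
  (∀ η ∈ q.dom, pfsub (pr η) η) ∧
  (∀ ℓ, ∀ ν ∈ plevel q ℓ, ∀ ρ ∈ plevel q (ℓ + 1), pfsub ν ρ →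
    pdom (pr ρ) ∩ pdom ν = pdom (pr ν))

/-- The order `≤_Q`. -/
def QLE (n2 : ℕ → ℕ) (p q : QCond) : Prop :=
  idx n2 p ≤ idx n2 q ∧ ∃ pr, Proj n2 p q pr

/-- The partial orders `≤_n`. -/
def QLEn (T : ATree) (n1 n2 n3 : ℕ → ℕ) (f : ℕ → ℕ → ℝ) (n : ℕ) (p q : QCond) : Prop :=
  QLE n2 p q ∧ idx n2 p = idx n2 q ∧
  (∀ ℓ, ℓ ≤ n → plevel p ℓ = plevel q ℓ) ∧
  (∀ ℓ, ℓ ≤ n → ∀ η ∈ plevel p ℓ, p.bval η = q.bval η) ∧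
  ∀ pr, Proj n2 p q pr → ∀ η ∈ q.dom,
    (pr η = η ∧ sucSet q η = sucSet p η ∧ q.bval η = p.bval η) ∨
    (n : ℝ) ≤ pnorm T n1 n2 n3 f q η

/-- `p` is smooth. -/
def SmoothQ (T : ATree) (p : QCond) : Prop :=
  ∃ α, α < omega1 ∧ ∀ b : ℕ → PF, OBranch p b → (⋃ ℓ, pdom (b ℓ)) = below T α

/-- `p` is weakly smooth, witnessed by `α` and `u`. -/
def WSmoothW (T : ATree) (p : QCond) (α : Ordinal) (u : Set Ordinal) : Prop :=
  α < omega1 ∧ u.Finite ∧ u ⊆ T.mem \ below T α ∧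
  ∀ b : ℕ → PF, OBranch p b → (⋃ ℓ, pdom (b ℓ)) \ u = below T α

/-- `p^⟨η⟩`: the restriction of `p` to the nodes extending `η`. -/
def restr (p : QCond) (η : PF) : QCond :=
  ⟨{ρ | ρ ∈ p.dom ∧ pfsub η ρ},
   fun x y => p.tlt x y ∧ (x ∈ p.dom ∧ pfsub η x) ∧ (y ∈ p.dom ∧ pfsub η y),
   p.bval⟩

/-- A front of `p^[]`. -/
def Front (p : QCond) (F : Set PF) : Prop :=
  F ⊆ p.dom ∧
  (∀ x ∈ F, ∀ y ∈ F, x ≠ y → ¬ p.tlt x y ∧ ¬ p.tlt y x) ∧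
  ∀ b : ℕ → PF, OBranch p b → ∃ ℓ, b ℓ ∈ F

/-- Two conditions are compatible iff they have a common extension in `Q`. -/
def Compat (T : ATree) (n1 n2 n3 : ℕ → ℕ) (f : ℕ → ℕ → ℝ) (r s : QCond) : Prop :=
  ∃ t, InQ T n1 n2 n3 f t ∧ QLE n2 r t ∧ QLE n2 s t

/-- `A` is predense above `p`. -/
def Predense (T : ATree) (n1 n2 n3 : ℕ → ℕ) (f : ℕ → ℕ → ℝ) (A : Set QCond) (p : QCond) : Prop :=
  ∀ r, InQ T n1 n2 n3 f r → QLE n2 p r → ∃ s ∈ A, Compat T n1 n2 n3 f s r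

/-- Equality of conditions as forcing conditions (their data agree on their domains). -/
def QEquiv (p q : QCond) : Prop :=
  p.dom = q.dom ∧ (∀ η ∈ p.dom, p.bval η = q.bval η) ∧
  ∀ x ∈ p.dom, ∀ y ∈ p.dom, (p.tlt x y ↔ q.tlt x y)

end

/-! If `η₁(x) = v` with `x` outside the base, feed `norm⁰ ≥ 1` the colour set `a = {v}` and a
branch through `x`: the resulting `η₂` cannot take the value `v` at `x`. -/

lemma ATree.exists_branch_mem (T : ATree) {x : Ordinal} (hx : x ∈ T.mem) :
    ∃ B, Branch T B ∧ x ∈ B := by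
  obtain ⟨M, hM, hxM⟩ := (IsChain.singleton (r := T.lt) (a := x)).exists_maxChain
  have hMmem : M ⊆ T.mem := by
    intro y hy
    rcases eq_or_ne y x with rfl | hne
    · exact hx
    · rcases hM.1 hy (hxM rfl) hne with h | h
      exacts [(T.lt_mem h).1, (T.lt_mem h).2]
  exact ⟨M, ⟨hMmem, hM.1, fun C hMC _ hC => hM.2 hC hMC⟩, hxM rfl⟩

lemma exists_pos_mem_of_sSup_pos {S : Set ℕ} (h : 0 < sSup S) : ∃ k ∈ S, 0 < k := by
  by_contra! hS
  have : sSup S ≤ 0 := csSup_le' fun k hk => hS k hk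
  omega

lemma clauseD_of_norm0P {T : ATree} {n2 n3 : ℕ → ℕ} {i k : ℕ} {base : PF} {R : Set PF}
    (hR : ∀ η ∈ R, specn T (n3 i) η) (hk : 0 < k) (hP : Norm0P T n2 n3 i base R k) :
    ClauseD base R := by
  intro η₁ hη₁ x hx hxb
  obtain ⟨v, hv⟩ := Option.ne_none_iff_exists'.mp hx
  obtain ⟨B, hB, hxB⟩ := T.exists_branch_mem ((hR η₁ hη₁).1 hx)
  obtain ⟨η₂, hη₂, havoid, -⟩ := hP {v} (by simpa using (hR η₁ hη₁).2.2.1 x v hv)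
    ((Finset.card_singleton v).le.trans hk) (fun _ => B) (fun _ => hB)
  refine ⟨η₂, hη₂, fun v₁ v₂ hv₁ hv₂ => ?_⟩
  have hx₂ : x ∈ pdom η₂ := by simp [pdom, hv₂]
  have := havoid x ⟨⟨0, hk⟩, hxB⟩ hx₂ hxb v₂ hv₂
  obtain rfl : v = v₁ := Option.some_injective _ (hv.symm.trans hv₁)
  exact fun h => this (Finset.mem_singleton.mpr h.symm)

lemma clauseD_of_norm0_pos {T : ATree} {n1 n2 n3 : ℕ → ℕ} {i : ℕ} {base : PF} {R : Set PF}
    (hv : ValOK T n1 n2 n3 i base R) (hn : 0 < norm0 T n2 n3 i base R) : ClauseD base R := by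
  obtain ⟨k, hP, hk⟩ := exists_pos_mem_of_sSup_pos hn
  exact clauseD_of_norm0P (fun η hη => (hv.2.2.1 η hη).1) hk hP

theorem stmt0_general (T : ATree) (n1 n2 n3 : ℕ → ℕ)
    (i : ℕ) (base : PF) (R : Set PF)
    (hb : BaseOK T n2 n3 i base) (hv : ValOK T n1 n2 n3 i base R)
    (hn : 0 < norm0 T n2 n3 i base R) :
    ClauseD base R ∧ SCr T n1 n2 n3 i base R :=
  have hd := clauseD_of_norm0_pos hv hn
  ⟨hd, hb, hv, hd⟩

/-- clause (d) follows from the remaining clauses of the definition of a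
simple `i`-creature together with `norm⁰(c) > 0`; hence `c` is a simple `i`-creature. -/
theorem stmt0 (T : ATree) (n1 n2 n3 : ℕ → ℕ) (hseq : SeqOK n1 n2 n3)
    (i : ℕ) (base : PF) (R : Set PF)
    (hb : BaseOK T n2 n3 i base) (hv : ValOK T n1 n2 n3 i base R)
    (hn : 0 < norm0 T n2 n3 i base R) :
    ClauseD base R ∧ SCr T n1 n2 n3 i base R :=
  stmt0_general T n1 n2 n3 i base R hb hv hn
end

section
/- (2-bigness for creatures.) If c⁺ = (c, k(c⁺)) is an i-creature with norm(c⁺) ≥ k+1, and c₁⁺ = (c₁, k(c₁⁺)), c₂⁺ = (c₂, k(c₂⁺)) are i-creatures such that val(c) = val(c₁) ∪ val(c₂) and k(c₁⁺) = k(c₂⁺) = k(c⁺), then norm(c₁⁺) ≥ k or norm(c₂⁺) ≥ k. -/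
open Classical Set

/-! Both creatures have base `b` and `R = R₁ ∪ R₂`. If `R` passes the `norm⁰` test for `2m`
colours and branches, then `R₁` or `R₂` passes it for `m`: otherwise the two failing colour sets
and branch families together defeat `R`. As `norm*` only grows on subsets, `norm^{1/2}` at worst
halves, which by (∗₃) costs `f` at most `1`. -/

theorem Set.singleton_prod_eq_union_singleton_prod {α β : Type*} {a a₁ a₂ : α}
    {s s₁ s₂ : Set β} (h₁ : s₁.Nonempty) (h₂ : s₂.Nonempty)
    (h : {a} ×ˢ s = {a₁} ×ˢ s₁ ∪ {a₂} ×ˢ s₂) :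
    a₁ = a ∧ a₂ = a ∧ s = s₁ ∪ s₂ := by
  obtain ⟨x₁, hx₁⟩ := h₁
  obtain ⟨x₂, hx₂⟩ := h₂
  have ha₁ : (a₁, x₁) ∈ ({a} ×ˢ s : Set (α × β)) := h ▸ Or.inl ⟨rfl, hx₁⟩
  have ha₂ : (a₂, x₂) ∈ ({a} ×ˢ s : Set (α × β)) := h ▸ Or.inr ⟨rfl, hx₂⟩
  obtain rfl : a₁ = a := ha₁.1
  obtain rfl : a₂ = a₁ := ha₂.1
  rw [← prod_union, singleton_prod, singleton_prod] at h
  exact ⟨rfl, rfl, (Prod.mk_right_injective _).image_injective h⟩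

section Norm0

variable {T : ATree} {n2 n3 : ℕ → ℕ} {i : ℕ} {b : PF}

lemma Norm0P.of_le {R : Set PF} {k k' : ℕ} (h : Norm0P T n2 n3 i b R k) (hk' : 0 < k')
    (hk : k' ≤ k) : Norm0P T n2 n3 i b R k' := by
  intro a ha hcard B hB
  obtain ⟨η, hηR, hmiss, hdom⟩ := h a ha (hcard.trans hk)
    (fun l => B ⟨l % k', Nat.mod_lt _ hk'⟩) (fun _ => hB _)
  refine ⟨η, hηR, ?_, le_trans (Nat.mul_le_mul_left _ (Nat.pow_le_pow_right two_pos hk)) hdom⟩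
  rintro x ⟨l, hxl⟩ hxη hxb v hv
  exact hmiss x ⟨⟨l, l.isLt.trans_le hk⟩, by simpa [Nat.mod_eq_of_lt l.isLt] using hxl⟩
    hxη hxb v hv

lemma Norm0P.mono {R R' : Set PF} {k : ℕ} (h : Norm0P T n2 n3 i b R' k) (hsub : R' ⊆ R) :
    Norm0P T n2 n3 i b R k := by
  intro a ha hcard B hB
  obtain ⟨η, hηR, hη⟩ := h a ha hcard B hB
  exact ⟨η, hsub hηR, hη⟩

lemma Norm0P.or_of_two_mul_of_subset_union {R R₁ R₂ : Set PF} {m : ℕ}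
    (h : Norm0P T n2 n3 i b R (2 * m)) (hsub : R ⊆ R₁ ∪ R₂) :
    Norm0P T n2 n3 i b R₁ m ∨ Norm0P T n2 n3 i b R₂ m := by
  by_contra! hcon
  obtain ⟨hn₁, hn₂⟩ := hcon
  simp only [Norm0P, not_forall, not_exists, not_and] at hn₁ hn₂
  obtain ⟨a₁, ha₁, hc₁, B₁, hB₁, hw₁⟩ := hn₁
  obtain ⟨a₂, ha₂, hc₂, B₂, hB₂, hw₂⟩ := hn₂
  let B : Fin (2 * m) → Set Ordinal := fun l =>
    if hl : (l : ℕ) < m then B₁ ⟨l, hl⟩ else B₂ ⟨l - m, by omega⟩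
  obtain ⟨η, hηR, hmiss, hdom⟩ := h (a₁ ∪ a₂)
    (fun v hv => (Finset.mem_union.1 hv).elim (ha₁ v) (ha₂ v))
    ((Finset.card_union_le _ _).trans (by omega)) B
    (fun l => by unfold B; split <;> [exact hB₁ _; exact hB₂ _])
  have hdom' : (pdom η).ncard * 2 ^ m ≤ n2 i :=
    le_trans (Nat.mul_le_mul_left _ (Nat.pow_le_pow_right two_pos (by omega))) hdom
  rcases hsub hηR with hη | hη
  · refine absurd hdom' (hw₁ η hη fun x ⟨l, hxl⟩ hxη hxb v hv hva => ?_)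
    refine hmiss x ⟨⟨l, by omega⟩, ?_⟩ hxη hxb v hv (Finset.mem_union_left _ hva)
    simpa [B, l.isLt] using hxl
  · refine absurd hdom' (hw₂ η hη fun x ⟨l, hxl⟩ hxη hxb v hv hva => ?_)
    refine hmiss x ⟨⟨m + l, by omega⟩, ?_⟩ hxη hxb v hv (Finset.mem_union_right _ hva)
    simpa [B] using hxl

variable {R : Set PF}

lemma bddAbove_norm0P_of_pos (h : 0 < norm0 T n2 n3 i b R) :
    BddAbove {k | Norm0P T n2 n3 i b R k} := by
  by_contra hb
  simp [norm0, csSup_of_not_bddAbove hb] at h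

lemma norm0P_norm0_of_pos (h : 0 < norm0 T n2 n3 i b R) :
    Norm0P T n2 n3 i b R (norm0 T n2 n3 i b R) := by
  refine Nat.sSup_mem ?_ (bddAbove_norm0P_of_pos h)
  by_contra hne
  simp [norm0, not_nonempty_iff_eq_empty.1 hne] at h

/-- `norm0` is `0` when `Norm0P` holds for unboundedly many `k`, so it is not monotone in `R`;
a positive `norm0` of a superset rules this out. -/
lemma le_norm0_of_subset {R' : Set PF} {m : ℕ} (hR : 0 < norm0 T n2 n3 i b R)
    (hsub : R' ⊆ R) (h : Norm0P T n2 n3 i b R' m) : m ≤ norm0 T n2 n3 i b R' :=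
  le_csSup ((bddAbove_norm0P_of_pos hR).mono fun _ hj => Norm0P.mono hj hsub) h

end Norm0

lemma normStar_anti {n1 : ℕ → ℕ} {i : ℕ} {R R' : Set PF} (hsub : R' ⊆ R) (hfin : R.Finite)
    (hne : R'.Nonempty) : normStar n1 i R ≤ normStar n1 i R' := by
  rcases Nat.eq_zero_or_pos (n1 i) with h0 | h0
  · simp [normStar, log2c, h0]
  have hR' : (0 : ℝ) < R'.ncard := by exact_mod_cast (ncard_pos (hfin.subset hsub)).2 hne
  have hle : (R'.ncard : ℝ) ≤ R.ncard := by exact_mod_cast ncard_le_ncard hsub hfin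
  have hn1 : (0 : ℝ) < n1 i := by exact_mod_cast h0
  apply Nat.ceil_mono
  rw [Real.logb_le_logb one_lt_two (div_pos hn1 (hR'.trans_le hle)) (div_pos hn1 hR')]
  exact div_le_div_of_nonneg_left hn1.le hR' hle

lemma normHalf_div_two_le_or {T : ATree} {n1 n2 n3 : ℕ → ℕ} {i : ℕ} {b : PF}
    {R₁ R₂ : Set PF} (hfin : (R₁ ∪ R₂).Finite) (h₁ : R₁.Nonempty)
    (h₂ : R₂.Nonempty) :
    normHalf T n1 n2 n3 i b (R₁ ∪ R₂) / 2 ≤ normHalf T n1 n2 n3 i b R₁ ∨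
      normHalf T n1 n2 n3 i b (R₁ ∪ R₂) / 2 ≤ normHalf T n1 n2 n3 i b R₂ := by
  set n := normHalf T n1 n2 n3 i b (R₁ ∪ R₂)
  rcases Nat.eq_zero_or_pos (n / 2) with hm | hm
  · simp [hm]
  have hn0 : n ≤ norm0 T n2 n3 i b (R₁ ∪ R₂) := min_le_left _ _
  have hnStar : n ≤ normStar n1 i (R₁ ∪ R₂) := min_le_right _ _
  have hpos : 0 < norm0 T n2 n3 i b (R₁ ∪ R₂) := by omega
  have hsplit := ((norm0P_norm0_of_pos hpos).of_le (by omega) (by omega :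
    2 * (n / 2) ≤ _)).or_of_two_mul_of_subset_union subset_rfl
  refine hsplit.imp (fun h => le_min ?_ ?_) (fun h => le_min ?_ ?_)
  · exact le_norm0_of_subset hpos subset_union_left h
  · exact (Nat.div_le_self n 2).trans (hnStar.trans (normStar_anti subset_union_left hfin h₁))
  · exact le_norm0_of_subset hpos subset_union_right h
  · exact (Nat.div_le_self n 2).trans (hnStar.trans (normStar_anti subset_union_right hfin h₂))

lemma FOK.le_of_div_two_le {f : ℕ → ℕ → ℝ} (hf : FOK f) {n n' k kc : ℕ}
    (h : (k : ℝ) + 1 ≤ f n kc) (hn : n / 2 ≤ n') : (k : ℝ) ≤ f n' kc := by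
  obtain ⟨hnonneg, hmono, hhalf, hzero, -⟩ := hf
  have hk : (k : ℝ) ≤ f (n / 2) kc := by linarith [hhalf n kc]
  by_cases hkc : n / 2 ≤ kc
  · rw [hzero _ _ hkc] at hk
    exact hk.trans (hnonneg _ _)
  · exact hk.trans (hmono _ _ _ _ hn (by omega) le_rfl)

theorem stmt5_general (T : ATree) (n1 n2 n3 : ℕ → ℕ)
    (f : ℕ → ℕ → ℝ) (hf : FOK f)
    (i k : ℕ) (kc : ℕ) (b b1 b2 : PF) (R R1 R2 : Set PF)
    (hc : SCr T n1 n2 n3 i b R)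
    (hc1 : SCr T n1 n2 n3 i b1 R1)
    (hc2 : SCr T n1 n2 n3 i b2 R2)
    (hval : ({b} ×ˢ R : Set (PF × PF)) = ({b1} ×ˢ R1) ∪ ({b2} ×ˢ R2))
    (hnorm : (k : ℝ) + 1 ≤ f (normHalf T n1 n2 n3 i b R) kc) :
    (k : ℝ) ≤ f (normHalf T n1 n2 n3 i b1 R1) kc ∨
    (k : ℝ) ≤ f (normHalf T n1 n2 n3 i b2 R2) kc := by
  obtain ⟨rfl, rfl, rfl⟩ :=
    Set.singleton_prod_eq_union_singleton_prod hc1.2.1.1 hc2.2.1.1 hval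
  exact (normHalf_div_two_le_or hc.2.1.2.1 hc1.2.1.1 hc2.2.1.1).imp
    (hf.le_of_div_two_le hnorm) (hf.le_of_div_two_le hnorm)

/-- 2-bigness for creatures. -/
theorem stmt5 (T : ATree) (n1 n2 n3 : ℕ → ℕ) (hseq : SeqOK n1 n2 n3)
    (f : ℕ → ℕ → ℝ) (hf : FOK f)
    (i k : ℕ) (kc : ℕ) (b b1 b2 : PF) (R R1 R2 : Set PF)
    (hc : SCr T n1 n2 n3 i b R)
    (hc1 : SCr T n1 n2 n3 i b1 R1)
    (hc2 : SCr T n1 n2 n3 i b2 R2)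
    (hval : ({b} ×ˢ R : Set (PF × PF)) = ({b1} ×ˢ R1) ∪ ({b2} ×ˢ R2))
    (hnorm : (k : ℝ) + 1 ≤ f (normHalf T n1 n2 n3 i b R) kc) :
    (k : ℝ) ≤ f (normHalf T n1 n2 n3 i b1 R1) kc ∨
    (k : ℝ) ≤ f (normHalf T n1 n2 n3 i b2 R2) kc :=
  stmt5_general T n1 n2 n3 f hf i k kc b b1 b2 R R1 R2 hc hc1 hc2 hval hnorm
end
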